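/- arXiv:1903.00928 — 7 statements merged into one kernel-verified Lean document; each statement's English description precedes it below -/
import Mathlib

section
/- For the hierarchy γ | p, ω ~ Gamma(p, ω) (rate parametrization), ω | p ~ Gamma(1−p, 1), p ~ Uniform(0,1), the marginal density of γ is 1/(γ((log γ)² + π²)) for γ > 0. Equivalently, ∫₀¹ ∫₀^∞ [ω^p γ^{p−1} e^{−ωγ}/Γ(p)] · [ω^{−p} e^{−ω}/Γ(1−p)] dω dp = 1/(γ((log γ)² + π²)). -/
/-!
Given `p`, the two Gamma densities multiply to `γ^(p-1) e^{-(1+γ)ω} / (Γ(p)Γ(1-p))`, so the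
`ω`-integral is `γ^(p-1) / ((1+γ) Γ(p)Γ(1-p)) = γ^(p-1) sin(πp) / (π(1+γ))` by the reflection
formula. Writing `γ^(p-1) = e^{L(p-1)}` with `L = log γ`, the remaining `p`-integral of
`e^{L(p-1)} sin(πp)` is elementary, equal to `π(1 + 1/γ)/(L² + π²)`, and the factor `1 + γ` cancels.
-/

open Real MeasureTheory

lemma integral_gamma_shape_mul_gamma_one_sub_shape_Ioi (p : ℝ) {γ : ℝ} (hγ : -1 < γ) :
    ∫ ω in Set.Ioi (0:ℝ),
        (ω ^ p * γ ^ (p - 1) * exp (-(ω * γ)) / Gamma p) *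
        (ω ^ (-p) * exp (-ω) / Gamma (1 - p))
      = γ ^ (p - 1) * sin (π * p) / (π * (1 + γ)) := by
  have hpoint : ∀ ω ∈ Set.Ioi (0:ℝ),
      (ω ^ p * γ ^ (p - 1) * exp (-(ω * γ)) / Gamma p) *
        (ω ^ (-p) * exp (-ω) / Gamma (1 - p))
      = γ ^ (p - 1) / (Gamma p * Gamma (1 - p)) * exp (-(1 + γ) * ω) := by
    intro ω hω
    have hpow : ω ^ p * ω ^ (-p) = 1 := by rw [← rpow_add hω, add_neg_cancel, rpow_zero]
    have hexp : exp (-(ω * γ)) * exp (-ω) = exp (-(1 + γ) * ω) := by rw [← exp_add]; ring_nf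
    calc _ = ω ^ p * ω ^ (-p) * (γ ^ (p - 1) * (exp (-(ω * γ)) * exp (-ω)))
            / (Gamma p * Gamma (1 - p)) := by ring
      _ = _ := by rw [hpow, hexp]; ring
  have h1γ : 1 + γ ≠ 0 := by linarith
  rw [setIntegral_congr_fun measurableSet_Ioi hpoint, integral_const_mul,
    integral_exp_mul_Ioi (by linarith) 0, Gamma_mul_Gamma_one_sub, div_div_eq_mul_div,
    mul_zero, exp_zero]
  field_simp [pi_ne_zero]

lemma hasDerivAt_exp_mul_sin_pi_antideriv (L p : ℝ) :
    HasDerivAt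
      (fun p ↦ exp (L * (p - 1)) * (L * sin (π * p) - π * cos (π * p)) / (L ^ 2 + π ^ 2))
      (exp (L * (p - 1)) * sin (π * p)) p := by
  have hlin : HasDerivAt (fun p : ℝ ↦ L * (p - 1)) L p := by
    simpa using ((hasDerivAt_id p).sub_const 1).const_mul L
  have hπp : HasDerivAt (fun p : ℝ ↦ π * p) π p := by simpa using (hasDerivAt_id p).const_mul π
  have htrig := (hπp.sin.const_mul L).sub (hπp.cos.const_mul π)
  refine ((hlin.exp.mul htrig).div_const _).congr_deriv ?_
  have : L ^ 2 + π ^ 2 ≠ 0 := by positivity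
  simp only [Pi.sub_apply]
  field_simp
  ring

lemma integral_exp_mul_sub_one_mul_sin_pi (L : ℝ) :
    ∫ p in (0:ℝ)..1, exp (L * (p - 1)) * sin (π * p) = π * (1 + exp (-L)) / (L ^ 2 + π ^ 2) := by
  rw [intervalIntegral.integral_eq_sub_of_hasDerivAt
    (fun p _ ↦ hasDerivAt_exp_mul_sin_pi_antideriv L p)
    ((by fun_prop : Continuous _).intervalIntegrable _ _)]
  have : L ^ 2 + π ^ 2 ≠ 0 := by positivity
  simp only [mul_one, mul_zero, sub_self, exp_zero, sin_pi, cos_pi, sin_zero, cos_zero, zero_sub]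
  field_simp
  ring

/-- Integrating out ω ~ Gamma(1-p,1) and p ~ Uniform(0,1) from the conditional
Gamma(p, ω) (shape-rate) density of γ yields the log-Cauchy HTHS marginal density. -/
theorem hths_hierarchy_marginal (γ : ℝ) (hγ : 0 < γ) :
    ∫ p in Set.Ioo (0:ℝ) 1, ∫ ω in Set.Ioi (0:ℝ),
        (ω ^ p * γ ^ (p - 1) * Real.exp (-(ω * γ)) / Real.Gamma p) *
        (ω ^ (-p) * Real.exp (-ω) / Real.Gamma (1 - p))
      = 1 / (γ * ((Real.log γ)^2 + π^2)) := by
  have hinner (p : ℝ) := integral_gamma_shape_mul_gamma_one_sub_shape_Ioi p (by linarith : -1 < γ)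
  calc _ = ∫ p in Set.Ioo (0:ℝ) 1, (π * (1 + γ))⁻¹ * (exp (log γ * (p - 1)) * sin (π * p)) := by
        congr 1 with p
        rw [hinner, rpow_def_of_pos hγ]
        ring
    _ = (π * (1 + γ))⁻¹ * ∫ p in (0:ℝ)..1, exp (log γ * (p - 1)) * sin (π * p) := by
        rw [integral_const_mul, intervalIntegral.integral_of_le zero_le_one,
          integral_Ioc_eq_integral_Ioo]
    _ = _ := by
        rw [integral_exp_mul_sub_one_mul_sin_pi, exp_neg, exp_log hγ]
        have : log γ ^ 2 + π ^ 2 ≠ 0 := by positivity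
        field_simp [pi_ne_zero]
        ring
end

section
/- The function g(τ) = 1/(τ(1−τ)([log τ − log(1−τ)]² + π²)) is a probability density on (0,1). -/
/-!
The log-odds substitution `u = log τ - log (1 - τ)`, inverted by the sigmoid `τ = σ u` with
`σ' = σ (1 - σ)`, turns the integral into `∫ u, (u ^ 2 + π ^ 2)⁻¹`, a Cauchy integral equal to
`π / π = 1`.
-/

open Real MeasureTheory Set

namespace Real

lemma log_sigmoid_sub_log_one_sub_sigmoid (x : ℝ) :
    log (sigmoid x) - log (1 - sigmoid x) = x := by
  rw [← sigmoid_neg, ← sigmoid_mul_rexp_neg, log_mul (sigmoid_pos x).ne' (exp_pos _).ne', log_exp]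
  ring

lemma integral_Ioo_zero_one_logit_smul {E : Type*} [NormedAddCommGroup E] [NormedSpace ℝ E]
    (f : ℝ → E) :
    ∫ τ in Ioo (0 : ℝ) 1, (τ * (1 - τ))⁻¹ • f (log τ - log (1 - τ)) = ∫ u, f u := by
  rw [← range_sigmoid, ← image_univ,
    integral_image_eq_integral_abs_deriv_smul MeasurableSet.univ
      (fun x _ ↦ (hasDerivAt_sigmoid x).hasDerivWithinAt) sigmoid_injective.injOn,
    setIntegral_univ]
  congr 1 with u
  have hpos : 0 < sigmoid u * (1 - sigmoid u) :=
    mul_pos (sigmoid_pos u) (sub_pos.2 (sigmoid_lt_one u))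
  rw [abs_of_pos hpos, smul_smul, mul_inv_cancel₀ hpos.ne', one_smul,
    log_sigmoid_sub_log_one_sub_sigmoid]

end Real

lemma integral_univ_inv_sq_add_sq {a : ℝ} (ha : 0 < a) : ∫ u : ℝ, (u ^ 2 + a ^ 2)⁻¹ = π / a := by
  have hscale (u : ℝ) : (u ^ 2 + a ^ 2)⁻¹ = (a ^ 2)⁻¹ * (1 + (a⁻¹ * u) ^ 2)⁻¹ := by
    field_simp
    ring
  simp_rw [hscale]
  rw [integral_const_mul, Measure.integral_comp_mul_left (fun x ↦ (1 + x ^ 2)⁻¹),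
    integral_univ_inv_one_add_sq, inv_inv, abs_of_pos ha, smul_eq_mul]
  field_simp

/-- The HTHS marginal density of the shrinkage profile τ integrates to 1 on (0,1). -/
theorem hths_tau_density_integrates_to_one :
    ∫ τ in Set.Ioo (0:ℝ) 1,
        1 / (τ * (1 - τ) * ((Real.log τ - Real.log (1 - τ))^2 + π^2)) = 1 := by
  have hdensity (τ : ℝ) : 1 / (τ * (1 - τ) * ((log τ - log (1 - τ)) ^ 2 + π ^ 2))
      = (τ * (1 - τ))⁻¹ • ((log τ - log (1 - τ)) ^ 2 + π ^ 2)⁻¹ := by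
    rw [smul_eq_mul, one_div, mul_inv]
  simp_rw [hdensity]
  rw [integral_Ioo_zero_one_logit_smul (fun u ↦ (u ^ 2 + π ^ 2)⁻¹),
    integral_univ_inv_sq_add_sq pi_pos, div_self pi_ne_zero]
end

section
/- Let κ(φ) = ∫₀^∞ (1/(ω + φ²/2)) e^{−ω} dω. Then φ² κ(φ) → 2 as |φ| → ∞; equivalently κ(φ) is asymptotically 2/φ². -/
/-!
Writing `t = φ² / 2`, we have `φ² κ(φ) = 2 ∫₀^∞ t / (ω + t) e^{-ω} dω`. The weight `t / (ω + t)`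
lies in `[0, 1]` and tends to `1` pointwise as `t → ∞`, so by dominated convergence the integral
tends to `∫₀^∞ e^{-ω} dω = 1`.
-/

open Real MeasureTheory Filter

/-- Up to a constant, the Horseshoe marginal prior density of φ. -/
noncomputable def hsPhiKernel (φ : ℝ) : ℝ :=
  ∫ ω in Set.Ioi (0:ℝ), (1 / (ω + φ^2 / 2)) * Real.exp (-ω)

lemma tendsto_div_add_self_atTop (ω : ℝ) : Tendsto (fun t : ℝ => t / (ω + t)) atTop (nhds 1) := by
  have h : Tendsto (fun t : ℝ => (ω * t⁻¹ + 1)⁻¹) atTop (nhds 1) := by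
    simpa using ((tendsto_inv_atTop_zero.const_mul ω).add_const 1).inv₀ (by simp)
  refine h.congr' ?_
  filter_upwards [eventually_gt_atTop 0] with t ht
  field_simp

lemma abs_div_add_self_le_one {ω t : ℝ} (hω : 0 ≤ ω) (ht : 0 < t) : |t / (ω + t)| ≤ 1 := by
  rw [abs_of_nonneg (by positivity), div_le_one (by positivity)]
  linarith

theorem tendsto_integral_div_add_mul_atTop {μ : Measure ℝ} {g : ℝ → ℝ} (hg : Integrable g μ)
    (hμ : ∀ᵐ ω ∂μ, 0 ≤ ω) :
    Tendsto (fun t => ∫ ω, t / (ω + t) * g ω ∂μ) atTop (nhds (∫ ω, g ω ∂μ)) := by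
  refine tendsto_integral_filter_of_dominated_convergence (fun ω => |g ω|)
    (Eventually.of_forall fun t =>
      (measurable_const.div (measurable_id.add_const t)).aestronglyMeasurable.mul
        hg.aestronglyMeasurable)
    ?_ hg.abs ?_
  · filter_upwards [eventually_gt_atTop 0] with t ht
    filter_upwards [hμ] with ω hω
    rw [norm_mul, Real.norm_eq_abs, Real.norm_eq_abs]
    exact mul_le_of_le_one_left (abs_nonneg _) (abs_div_add_self_le_one hω ht)
  · exact Eventually.of_forall fun ω => by
      simpa using (tendsto_div_add_self_atTop ω).mul_const (g ω)

lemma sq_mul_hsPhiKernel (φ : ℝ) :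
    φ^2 * hsPhiKernel φ =
      2 * ∫ ω in Set.Ioi (0:ℝ), (φ^2 / 2) / (ω + φ^2 / 2) * Real.exp (-ω) := by
  rw [hsPhiKernel, ← integral_const_mul, ← integral_const_mul]
  congr 1 with ω
  ring

lemma tendsto_sq_div_two_cocompact_atTop :
    Tendsto (fun φ : ℝ => φ^2 / 2) (Filter.cocompact ℝ) atTop := by
  have h := (tendsto_pow_atTop (two_ne_zero (α := ℕ))).comp (tendsto_norm_cocompact_atTop (E := ℝ))
  simpa only [Function.comp_def, Real.norm_eq_abs, sq_abs] using h.atTop_div_const two_pos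

/-- The Horseshoe marginal of φ has quadratic tails: φ² κ(φ) → 2 as |φ| → ∞. -/
theorem hs_phi_tail :
    Filter.Tendsto (fun φ : ℝ => φ^2 * hsPhiKernel φ) (Filter.cocompact ℝ) (nhds 2) := by
  have hlim := tendsto_integral_div_add_mul_atTop
    (μ := volume.restrict (Set.Ioi 0)) (exp_neg_integrableOn_Ioi 0 one_pos)
    (ae_restrict_of_forall_mem measurableSet_Ioi fun _ hω => hω.le)
  simp only [neg_mul, one_mul, integral_exp_neg_Ioi_zero] at hlim
  simpa only [sq_mul_hsPhiKernel, mul_one, Function.comp_def] using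
    (hlim.comp tendsto_sq_div_two_cocompact_atTop).const_mul 2
end

section
/- The HTHS prior marginal on φ has heavier tails than the Horseshoe prior marginal: with κ(φ) = ∫₀^∞ e^{−ω}/(ω + φ²/2) dω and h(φ) as the HTHS integral ∫₀^∞ [(φ²/2 + ω + 1)/(((log(φ²/2 + ω))² + π²)(φ²/2 + ω)^{3/2})] e^{−ω} dω, the ratio κ(φ)/h(φ) → 0 as |φ| → ∞. -/
open Real MeasureTheory Filter

/-- Up to a constant, the HTHS marginal prior density of φ. -/
noncomputable def hthsPhiKernel (φ : ℝ) : ℝ :=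
  ∫ ω in Set.Ioi (0:ℝ),
    ((φ^2 / 2 + ω + 1) / (((Real.log (φ^2 / 2 + ω))^2 + π^2) * (φ^2 / 2 + ω) ^ ((3:ℝ)/2)))
      * Real.exp (-ω)

/-!
Against the weight `e^{-ω}` on `(0, ∞)`, the Horseshoe integrand `1/(ω + φ²/2)` is at most `2/φ²`,
so `κ(φ) ≤ 2/φ²`. The HTHS integrand is `g(φ²/2 + ω)` with
`g u = (u + 1)/((log² u + π²) u^{3/2}) ≥ 1/((log² u + π²) √u)`, and the right-hand side is
decreasing for `u ≥ 1`. For `φ² ≥ 2`, restricting the integral to `ω ∈ (0, 1]`, where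
`1 ≤ φ²/2 + ω ≤ φ²`, gives
`h(φ) ≥ e^{-1}/((log² φ² + π²) |φ|)`. Hence `κ/h ≤ 2e (log² φ² + π²)/|φ| → 0`.
-/

section LaplaceWeight

open Set

variable {F : ℝ → ℝ}

lemma setIntegral_mul_exp_neg_le {C : ℝ} (hF : ∀ ω ∈ Ioi (0:ℝ), 0 ≤ F ω)
    (hFC : ∀ ω ∈ Ioi (0:ℝ), F ω ≤ C) :
    ∫ ω in Ioi (0:ℝ), F ω * exp (-ω) ≤ C := by
  calc ∫ ω in Ioi (0:ℝ), F ω * exp (-ω) ≤ ∫ ω in Ioi (0:ℝ), C * exp (-ω) := by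
        refine integral_mono_of_nonneg ?_ ((integrableOn_exp_neg_Ioi 0).const_mul C) ?_
        · filter_upwards [ae_restrict_mem measurableSet_Ioi] with ω hω
          exact mul_nonneg (hF ω hω) (exp_nonneg _)
        · filter_upwards [ae_restrict_mem measurableSet_Ioi] with ω hω
          exact mul_le_mul_of_nonneg_right (hFC ω hω) (exp_nonneg _)
    _ = C := by rw [integral_const_mul, integral_exp_neg_Ioi_zero, mul_one]

lemma integrableOn_mul_exp_neg {C : ℝ} (hFm : Measurable F)
    (hFC : ∀ ω ∈ Ioi (0:ℝ), ‖F ω‖ ≤ C) :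
    IntegrableOn (fun ω => F ω * exp (-ω)) (Ioi 0) := by
  refine Integrable.bdd_mul (c := C) (integrableOn_exp_neg_Ioi 0) hFm.aestronglyMeasurable ?_
  filter_upwards [ae_restrict_mem measurableSet_Ioi] with ω hω using hFC ω hω

lemma mul_exp_neg_one_le_setIntegral_mul_exp_neg {c : ℝ}
    (hint : IntegrableOn (fun ω => F ω * exp (-ω)) (Ioi 0))
    (hF : ∀ ω ∈ Ioi (0:ℝ), 0 ≤ F ω) (hc : ∀ ω ∈ Ioc (0:ℝ) 1, c ≤ F ω) :
    c * exp (-1) ≤ ∫ ω in Ioi (0:ℝ), F ω * exp (-ω) := by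
  have hpointwise : ∀ ω ∈ Ioc (0:ℝ) 1, c * exp (-1) ≤ F ω * exp (-ω) := fun ω hω =>
    calc c * exp (-1) ≤ F ω * exp (-1) := mul_le_mul_of_nonneg_right (hc ω hω) (exp_nonneg _)
      _ ≤ F ω * exp (-ω) :=
        mul_le_mul_of_nonneg_left (exp_le_exp.mpr (by linarith [hω.2])) (hF ω hω.1)
  calc c * exp (-1) = ∫ _ in Ioc (0:ℝ) 1, c * exp (-1) := by simp
    _ ≤ ∫ ω in Ioc (0:ℝ) 1, F ω * exp (-ω) :=
        setIntegral_mono_on (integrableOn_const measure_Ioc_lt_top.ne)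
          (hint.mono_set Ioc_subset_Ioi_self) measurableSet_Ioc hpointwise
    _ ≤ ∫ ω in Ioi (0:ℝ), F ω * exp (-ω) := by
        refine setIntegral_mono_set hint ?_ Ioc_subset_Ioi_self.eventuallyLE
        filter_upwards [ae_restrict_mem measurableSet_Ioi] with ω hω
        exact mul_nonneg (hF ω hω) (exp_nonneg _)

end LaplaceWeight

noncomputable def hthsDensity (u : ℝ) : ℝ :=
  (u + 1) / ((log u ^ 2 + π ^ 2) * u ^ ((3:ℝ)/2))

noncomputable def hthsEnvelope (u : ℝ) : ℝ :=
  ((log u ^ 2 + π ^ 2) * √u)⁻¹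

lemma measurable_hthsDensity : Measurable hthsDensity := by
  unfold hthsDensity; fun_prop

lemma hthsDensity_nonneg {u : ℝ} (hu : 0 ≤ u) : 0 ≤ hthsDensity u := by
  unfold hthsDensity; positivity

lemma hthsDensity_le_one {u : ℝ} (hu : 1 ≤ u) : hthsDensity u ≤ 1 := by
  have hpi : 2 ≤ π ^ 2 := by nlinarith [pi_gt_three]
  have hpow : u ≤ u ^ ((3:ℝ)/2) := by
    simpa using rpow_le_rpow_of_exponent_le hu (show (1:ℝ) ≤ 3/2 by norm_num)
  rw [hthsDensity, div_le_one (by positivity)]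
  calc u + 1 ≤ π ^ 2 * u := by nlinarith
    _ ≤ (log u ^ 2 + π ^ 2) * u ^ ((3:ℝ)/2) :=
        mul_le_mul (by nlinarith [sq_nonneg (log u)]) hpow (by linarith) (by positivity)

lemma hthsEnvelope_le_hthsDensity {u : ℝ} (hu : 0 < u) : hthsEnvelope u ≤ hthsDensity u := by
  have hsplit : u ^ ((3:ℝ)/2) = u * √u := by
    rw [sqrt_eq_rpow, ← rpow_one_add' hu.le (by norm_num)]; norm_num
  rw [hthsEnvelope, hthsDensity, hsplit, le_div_iff₀ (by positivity)]
  calc ((log u ^ 2 + π ^ 2) * √u)⁻¹ * ((log u ^ 2 + π ^ 2) * (u * √u)) = u := by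
        field_simp
    _ ≤ u + 1 := by linarith

lemma hthsEnvelope_antitoneOn : AntitoneOn hthsEnvelope (Set.Ici 1) := by
  intro u (hu : 1 ≤ u) v (hv : 1 ≤ v) huv
  have hlog : log u ^ 2 ≤ log v ^ 2 :=
    pow_le_pow_left₀ (log_nonneg hu) (log_le_log (by linarith) huv) 2
  exact inv_anti₀ (by positivity) (mul_le_mul (by linarith) (sqrt_le_sqrt huv) (by positivity)
    (by positivity))

lemma tendsto_log_sq_add_pi_sq_div_sqrt_atTop :
    Tendsto (fun u : ℝ => (log u ^ 2 + π ^ 2) / √u) atTop (nhds 0) := by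
  have hlog : Tendsto (fun u : ℝ => log u ^ 2 / √u) atTop (nhds 0) := by
    refine ((isLittleO_log_rpow_rpow_atTop 2 (by norm_num : (0:ℝ) < 1/2)).tendsto_div_nhds_zero).congr
      fun u => ?_
    rw [rpow_two, sqrt_eq_rpow]
  have hpi : Tendsto (fun u : ℝ => π ^ 2 / √u) atTop (nhds 0) :=
    tendsto_const_nhds.div_atTop tendsto_sqrt_atTop
  simpa only [add_div, add_zero] using hlog.add hpi

lemma hsPhiKernel_nonneg (φ : ℝ) : 0 ≤ hsPhiKernel φ :=
  setIntegral_nonneg measurableSet_Ioi fun ω (hω : 0 < ω) => by positivity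

lemma hsPhiKernel_le {φ : ℝ} (hφ : φ ≠ 0) : hsPhiKernel φ ≤ 2 / φ ^ 2 := by
  have hφ2 : 0 < φ ^ 2 / 2 := by positivity
  refine setIntegral_mul_exp_neg_le (fun ω (hω : 0 < ω) => by positivity) fun ω (hω : 0 < ω) => ?_
  calc 1 / (ω + φ ^ 2 / 2) ≤ 1 / (φ ^ 2 / 2) := one_div_le_one_div_of_le hφ2 (by linarith)
    _ = 2 / φ ^ 2 := by field_simp

lemma hthsPhiKernel_eq (φ : ℝ) :
    hthsPhiKernel φ = ∫ ω in Set.Ioi (0:ℝ), hthsDensity (φ ^ 2 / 2 + ω) * exp (-ω) := rfl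

lemma hthsPhiKernel_nonneg (φ : ℝ) : 0 ≤ hthsPhiKernel φ :=
  setIntegral_nonneg measurableSet_Ioi fun ω (hω : 0 < ω) =>
    mul_nonneg (hthsDensity_nonneg (by positivity)) (exp_nonneg _)

lemma hthsEnvelope_mul_exp_neg_one_le_hthsPhiKernel {φ : ℝ} (hφ : 2 ≤ φ ^ 2) :
    hthsEnvelope (φ ^ 2) * exp (-1) ≤ hthsPhiKernel φ := by
  rw [hthsPhiKernel_eq]
  have hbound : ∀ ω ∈ Set.Ioi (0:ℝ), ‖hthsDensity (φ ^ 2 / 2 + ω)‖ ≤ 1 := fun ω (hω : 0 < ω) => by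
    rw [norm_of_nonneg (hthsDensity_nonneg (by positivity))]
    exact hthsDensity_le_one (by linarith)
  refine mul_exp_neg_one_le_setIntegral_mul_exp_neg
    (integrableOn_mul_exp_neg (measurable_hthsDensity.comp (measurable_const_add _)) hbound)
    (fun ω (hω : 0 < ω) => hthsDensity_nonneg (by positivity)) fun ω ⟨hω0, hω1⟩ => ?_
  calc hthsEnvelope (φ ^ 2) ≤ hthsEnvelope (φ ^ 2 / 2 + ω) :=
        hthsEnvelope_antitoneOn (show (1:ℝ) ≤ φ ^ 2 / 2 + ω by linarith)
          (show (1:ℝ) ≤ φ ^ 2 by linarith) (by linarith)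
    _ ≤ hthsDensity (φ ^ 2 / 2 + ω) := hthsEnvelope_le_hthsDensity (by positivity)

lemma hsPhiKernel_div_hthsPhiKernel_le {φ : ℝ} (hφ : 2 ≤ φ ^ 2) :
    hsPhiKernel φ / hthsPhiKernel φ ≤ 2 * exp 1 * ((log (φ ^ 2) ^ 2 + π ^ 2) / √(φ ^ 2)) := by
  have hφ0 : φ ≠ 0 := by rintro rfl; norm_num at hφ
  have hlower := hthsEnvelope_mul_exp_neg_one_le_hthsPhiKernel hφ
  have henv : 0 < hthsEnvelope (φ ^ 2) * exp (-1) := by unfold hthsEnvelope; positivity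
  calc hsPhiKernel φ / hthsPhiKernel φ ≤ (2 / φ ^ 2) / (hthsEnvelope (φ ^ 2) * exp (-1)) :=
        div_le_div₀ (by positivity) (hsPhiKernel_le hφ0) henv hlower
    _ = 2 * exp 1 * ((log (φ ^ 2) ^ 2 + π ^ 2) / √(φ ^ 2)) := by
        rw [hthsEnvelope, exp_neg]
        field_simp
        exact sq_sqrt (by positivity)

/-- The HTHS prior marginal of φ has heavier tails than the Horseshoe prior marginal. -/
theorem hths_heavier_tails_than_hs :
    Filter.Tendsto (fun φ : ℝ => hsPhiKernel φ / hthsPhiKernel φ)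
      (Filter.cocompact ℝ) (nhds 0) := by
  have hsq : Tendsto (fun φ : ℝ => φ ^ 2) (cocompact ℝ) atTop := by
    simpa only [Function.comp_def, norm_eq_abs, sq_abs] using
      (tendsto_pow_atTop two_ne_zero).comp (tendsto_norm_cocompact_atTop (E := ℝ))
  have hbound := (tendsto_log_sq_add_pi_sq_div_sqrt_atTop.const_mul (2 * exp 1)).comp hsq
  rw [mul_zero] at hbound
  refine squeeze_zero' (Eventually.of_forall fun φ =>
    div_nonneg (hsPhiKernel_nonneg φ) (hthsPhiKernel_nonneg φ)) ?_ hbound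
  filter_upwards [hsq.eventually (eventually_ge_atTop 2)] with φ hφ
  exact hsPhiKernel_div_hthsPhiKernel_le hφ
end

section
/- The HTHS τ-density ratio to the Beta(1/2,1/2) density diverges at both endpoints: with g(τ) = 1/(τ(1−τ)([log(τ/(1−τ))]² + π²)) and b(τ) = 1/(π√(τ(1−τ))), the ratio g(τ)/b(τ) → ∞ as τ → 0⁺ and as τ → 1⁻. -/
/-!
On `(0,1)` the ratio is `π / (√(τ(1-τ)) (log²(τ/(1-τ)) + π²))`, and both densities are invariant
under `τ ↦ 1 - τ`, so only `τ → 0⁺` needs work. There the denominator equals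
`√(1-τ) ((τ^(1/4) log(τ/(1-τ)))² + π² √τ)`, which tends to `0⁺` because powers beat logarithms.
-/

open Real MeasureTheory Filter

/-- The HTHS marginal density of the shrinkage profile τ on (0,1). -/
noncomputable def gHTHS (τ : ℝ) : ℝ :=
  1 / (τ * (1 - τ) * ((Real.log (τ / (1 - τ)))^2 + π^2))

/-- The Beta(1/2,1/2) (Horseshoe) density of τ on (0,1). -/
noncomputable def bHS (τ : ℝ) : ℝ := 1 / (π * Real.sqrt (τ * (1 - τ)))

open Set Topology

lemma gHTHS_div_bHS {τ : ℝ} (h0 : 0 < τ) (h1 : τ < 1) :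
    gHTHS τ / bHS τ = π / (√(τ * (1 - τ)) * (log (τ / (1 - τ)) ^ 2 + π ^ 2)) := by
  have hsq : √(τ * (1 - τ)) * √(τ * (1 - τ)) = τ * (1 - τ) :=
    mul_self_sqrt (mul_pos h0 (by linarith)).le
  have hs : 0 < √(τ * (1 - τ)) := sqrt_pos.mpr (mul_pos h0 (by linarith))
  unfold gHTHS bHS
  nth_rw 1 [← hsq]
  field_simp

lemma gHTHS_one_sub (τ : ℝ) : gHTHS (1 - τ) = gHTHS τ := by
  rw [gHTHS, gHTHS, sub_sub_cancel, ← inv_div τ, log_inv, neg_sq, mul_comm (1 - τ)]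

lemma bHS_one_sub (τ : ℝ) : bHS (1 - τ) = bHS τ := by
  rw [bHS, bHS, sub_sub_cancel, mul_comm (1 - τ)]

lemma tendsto_rpow_mul_log_div_one_sub_nhdsGT_zero {r : ℝ} (hr : 0 < r) :
    Tendsto (fun τ => τ ^ r * log (τ / (1 - τ))) (𝓝[>] 0) (𝓝 0) := by
  have hlog : Tendsto (fun τ => τ ^ r * log τ) (𝓝[>] 0) (𝓝 0) :=
    (tendsto_log_mul_rpow_nhdsGT_zero hr).congr fun τ => mul_comm _ _
  have hcont : Tendsto (fun τ => τ ^ r * log (1 - τ)) (𝓝[>] 0) (𝓝 0) := by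
    have : ContinuousAt (fun τ => τ ^ r * log (1 - τ)) 0 := by
      fun_prop (disch := first | exact Or.inr hr.le | norm_num)
    simpa [zero_rpow hr.ne'] using this.tendsto.mono_left nhdsWithin_le_nhds
  refine ((hlog.sub hcont).congr' ?_).trans (by simp)
  filter_upwards [Ioo_mem_nhdsGT one_pos] with τ hτ
  rw [log_div hτ.1.ne' (by linarith [hτ.2]), mul_sub]

lemma tendsto_sqrt_mul_log_div_one_sub_sq_add_nhdsGT_zero {c : ℝ} (hc : 0 < c) :
    Tendsto (fun τ => √(τ * (1 - τ)) * (log (τ / (1 - τ)) ^ 2 + c)) (𝓝[>] 0) (𝓝[>] 0) := by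
  have hsplit : ∀ τ ∈ Ioo (0 : ℝ) 1, √(τ * (1 - τ)) * (log (τ / (1 - τ)) ^ 2 + c)
      = √(1 - τ) * ((τ ^ (1 / 4 : ℝ) * log (τ / (1 - τ))) ^ 2 + c * √τ) := by
    intro τ hτ
    have hquarter : (τ ^ (1 / 4 : ℝ)) ^ 2 = √τ := by
      rw [sqrt_eq_rpow, ← rpow_natCast, ← rpow_mul hτ.1.le]
      norm_num
    rw [mul_pow, hquarter, sqrt_mul hτ.1.le]
    ring
  have hlim : Tendsto (fun τ => √(1 - τ) * ((τ ^ (1 / 4 : ℝ) * log (τ / (1 - τ))) ^ 2 + c * √τ))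
      (𝓝[>] 0) (𝓝 0) := by
    have hsqrt : Tendsto (fun τ : ℝ => √τ) (𝓝[>] 0) (𝓝 0) := by
      simpa using (continuous_sqrt.tendsto 0).mono_left nhdsWithin_le_nhds
    have hsqrt_one_sub : Tendsto (fun τ : ℝ => √(1 - τ)) (𝓝[>] 0) (𝓝 1) := by
      have : ContinuousAt (fun τ : ℝ => √(1 - τ)) 0 := by fun_prop
      simpa using this.tendsto.mono_left nhdsWithin_le_nhds
    simpa using hsqrt_one_sub.mul
      (((tendsto_rpow_mul_log_div_one_sub_nhdsGT_zero (by norm_num)).pow 2).add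
        (hsqrt.const_mul c))
  refine tendsto_nhdsWithin_iff.mpr ⟨hlim.congr' ?_, ?_⟩ <;>
    filter_upwards [Ioo_mem_nhdsGT one_pos] with τ hτ
  · exact (hsplit τ hτ).symm
  · have : 0 < τ * (1 - τ) := mul_pos hτ.1 (by linarith [hτ.2])
    exact mem_Ioi.mpr (by positivity)

lemma tendsto_gHTHS_div_bHS_nhdsGT_zero :
    Tendsto (fun τ => gHTHS τ / bHS τ) (𝓝[>] 0) atTop := by
  refine (((tendsto_sqrt_mul_log_div_one_sub_sq_add_nhdsGT_zero (pow_pos pi_pos 2)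
    ).inv_tendsto_nhdsGT_zero).const_mul_atTop pi_pos).congr' ?_
  filter_upwards [Ioo_mem_nhdsGT one_pos] with τ hτ
  rw [gHTHS_div_bHS hτ.1 hτ.2, div_eq_mul_inv]
  rfl

/-- The ratio of the HTHS τ-density to the Beta(1/2,1/2) density diverges at both
endpoints of (0,1). -/
theorem hths_tau_ratio_diverges :
    Filter.Tendsto (fun τ => gHTHS τ / bHS τ) (nhdsWithin 0 (Set.Ioi (0:ℝ))) Filter.atTop ∧
    Filter.Tendsto (fun τ => gHTHS τ / bHS τ) (nhdsWithin 1 (Set.Iio (1:ℝ))) Filter.atTop := by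
  refine ⟨tendsto_gHTHS_div_bHS_nhdsGT_zero, ?_⟩
  have hreflect : Tendsto (fun τ : ℝ => 1 - τ) (𝓝[<] 1) (𝓝[>] 0) := by
    have : Tendsto (fun τ : ℝ => 1 - τ) (𝓝[<] 1) (𝓝[>] (1 - 1)) :=
      ContinuousWithinAt.tendsto_nhdsWithin (by fun_prop) fun _ h => sub_lt_sub_left h (1 : ℝ)
    rwa [sub_self] at this
  simpa [Function.comp_def, gHTHS_one_sub, bHS_one_sub] using
    tendsto_gHTHS_div_bHS_nhdsGT_zero.comp hreflect
end

section
/- For a ∈ (0, 1/2) and φ ≠ 0, ∫₀^∞ (1/√(2π t)) e^{−φ²/(2t)} (a/2)(t^{a−1} 1_{t<1} + t^{−a−1} 1_{t≥1}) dt = (a 2^{a−1}/(√π |φ|^{1+2a})) Γ_L(1/2 + a, φ²/2) + (a 2^{−a−1}/(√π |φ|^{1−2a})) Γ_U(1/2 − a, φ²/2), where Γ_L and Γ_U are the lower and upper incomplete gamma functions. -/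
/-!
Substitute `t = c / u` with `c = φ² / 2`: the Gaussian factor becomes `e^{-u}`, the Jacobian
`c / u²` merges with `(2πt)^{-1/2} t^{a-1}` resp. `(2πt)^{-1/2} t^{-a-1}` into constant
multiples of `u^{(1/2 - a) - 1}` resp. `u^{(1/2 + a) - 1}`, and the threshold `t < 1` becomes
`u > c`. Splitting the `u`-integral at `c` leaves exactly the upper and lower incomplete gamma
integrals.
-/

open Real MeasureTheory

/-- Lower incomplete gamma function Γ_L(s,x) = ∫₀ˣ u^{s-1} e^{-u} du. -/
noncomputable def lowerGamma (s x : ℝ) : ℝ :=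
  ∫ u in Set.Ioo (0:ℝ) x, u ^ (s - 1) * Real.exp (-u)

/-- Upper incomplete gamma function Γ_U(s,x) = ∫ₓ^∞ u^{s-1} e^{-u} du. -/
noncomputable def upperGamma (s x : ℝ) : ℝ :=
  ∫ u in Set.Ioi x, u ^ (s - 1) * Real.exp (-u)

open Set

theorem integral_Ioi_eq_integral_div_sq_smul_comp_div {E : Type*} [NormedAddCommGroup E]
    [NormedSpace ℝ E] (f : ℝ → E) {c : ℝ} (hc : 0 < c) :
    ∫ t in Ioi (0:ℝ), f t = ∫ u in Ioi (0:ℝ), (c / u ^ 2) • f (c / u) := by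
  have hinv := integral_comp_rpow_Ioi (fun x => f (c * x)) (p := -1) (by norm_num)
  rw [integral_comp_mul_left_Ioi f 0 hc, mul_zero] at hinv
  rw [← smul_inv_smul₀ hc.ne' (∫ t in Ioi (0:ℝ), f t), ← hinv, ← integral_smul]
  refine setIntegral_congr_fun measurableSet_Ioi fun u (hu : 0 < u) => ?_
  rw [smul_smul, rpow_neg_one, abs_neg, abs_one, one_mul,
    show (-1 - 1 : ℝ) = -(2:ℕ) by norm_num, rpow_neg hu.le, rpow_natCast, div_eq_mul_inv c u,
    div_eq_mul_inv]

theorem setIntegral_Ioi_ite_lt_eq_add {f g : ℝ → ℝ} {c : ℝ} (hc : 0 ≤ c)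
    (hg : IntegrableOn g (Ioc 0 c)) (hf : IntegrableOn f (Ioi c)) :
    ∫ u in Ioi (0:ℝ), (if c < u then f u else g u)
      = (∫ u in Ioc 0 c, g u) + ∫ u in Ioi c, f u := by
  have hg' : EqOn (fun u => if c < u then f u else g u) g (Ioc 0 c) :=
    fun u hu => if_neg (not_lt.mpr hu.2)
  have hf' : EqOn (fun u => if c < u then f u else g u) f (Ioi c) := fun u hu => if_pos hu
  rw [← Ioc_union_Ioi_eq_Ioi hc, setIntegral_union Ioc_disjoint_Ioi_same measurableSet_Ioi
      (hg.congr_fun hg'.symm measurableSet_Ioc) (hf.congr_fun hf'.symm measurableSet_Ioi),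
    setIntegral_congr_fun measurableSet_Ioc hg', setIntegral_congr_fun measurableSet_Ioi hf']

theorem integrableOn_rpow_sub_one_mul_exp_neg {s : ℝ} (hs : 0 < s) :
    IntegrableOn (fun u : ℝ => u ^ (s - 1) * exp (-u)) (Ioi 0) :=
  (GammaIntegral_convergent hs).congr_fun (fun _ _ => mul_comm _ _) measurableSet_Ioi

theorem div_sq_mul_rpow_div_div_sqrt {c u : ℝ} (hc : 0 < c) (hu : 0 < u) (r : ℝ) :
    c / u ^ 2 * ((c / u) ^ (-r - 1/2) / √(2 * π * (c / u)))
      = c ^ (-r) / √(2 * π) * u ^ (r - 1) := by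
  have hcu : 0 < c / u := div_pos hc hu
  rw [sqrt_mul (by positivity), sqrt_eq_rpow (c / u), mul_comm √(2 * π), ← div_div,
    ← rpow_sub hcu, show -r - 1/2 - 1/2 = -(r + 1) by ring, rpow_neg hcu.le, div_rpow hc.le hu.le,
    rpow_add hc, rpow_add hu, rpow_one, rpow_one, rpow_neg hc.le, rpow_sub_one hu.ne']
  field_simp

theorem half_mul_rpow_neg_sq_div_two_div_sqrt_two_pi (a : ℝ) {φ : ℝ} (hφ : φ ≠ 0) (r : ℝ) :
    a / 2 * ((φ ^ 2 / 2) ^ (-r) / √(2 * π))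
      = a * 2 ^ (r - 3/2) / (√π * |φ| ^ (2 * r)) := by
  have hb : 0 < |φ| := abs_pos.mpr hφ
  rw [← sq_abs, div_rpow (by positivity) zero_le_two, ← rpow_natCast, ← rpow_mul hb.le,
    show ((2:ℕ):ℝ) * -r = -(2 * r) by push_cast; ring, rpow_neg hb.le,
    sqrt_mul zero_le_two, sqrt_eq_rpow 2, rpow_sub two_pos, rpow_neg zero_le_two,
    show (3/2 : ℝ) = 1 + 1/2 by norm_num, rpow_add two_pos, rpow_one]
  field_simp

theorem div_sq_mul_scaleMixtureIntegrand_div {a c φ u : ℝ} (hc : 0 < c) (hφ : φ ^ 2 = 2 * c)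
    (hu : 0 < u) :
    c / u ^ 2 * (1 / √(2 * π * (c / u)) * exp (-(φ ^ 2) / (2 * (c / u))) *
        (a / 2 * if c / u < 1 then (c / u) ^ (a - 1) else (c / u) ^ (-a - 1)))
      = if c < u then a / 2 * (c ^ (-(1/2 - a)) / √(2 * π)) * (u ^ (1/2 - a - 1) * exp (-u))
        else a / 2 * (c ^ (-(1/2 + a)) / √(2 * π)) * (u ^ (1/2 + a - 1) * exp (-u)) := by
  have hexp : -(φ ^ 2) / (2 * (c / u)) = -u := by rw [hφ]; field_simp
  rw [hexp, if_congr (div_lt_one hu) rfl rfl]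
  split_ifs
  · rw [show a - 1 = -(1/2 - a) - 1/2 by ring]
    linear_combination (a / 2 * exp (-u)) * div_sq_mul_rpow_div_div_sqrt hc hu (1/2 - a)
  · rw [show -a - 1 = -(1/2 + a) - 1/2 by ring]
    linear_combination (a / 2 * exp (-u)) * div_sq_mul_rpow_div_div_sqrt hc hu (1/2 + a)

/-- Normal scale mixture with mixing density (a/2)(t^{a-1}1_{t<1} + t^{-a-1}1_{t≥1}),
expressed via incomplete gamma functions. -/
theorem scale_mixture_incomplete_gamma (a φ : ℝ) (ha : a ∈ Set.Ioo (0:ℝ) (1/2))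
    (hφ : φ ≠ 0) :
    ∫ t in Set.Ioi (0:ℝ),
        (1 / Real.sqrt (2 * π * t)) * Real.exp (-(φ^2) / (2 * t)) *
          ((a / 2) * (if t < 1 then t ^ (a - 1) else t ^ (-a - 1)))
      = (a * 2 ^ (a - 1) / (Real.sqrt π * |φ| ^ (1 + 2*a))) * lowerGamma (1/2 + a) (φ^2 / 2)
        + (a * 2 ^ (-a - 1) / (Real.sqrt π * |φ| ^ (1 - 2*a))) * upperGamma (1/2 - a) (φ^2 / 2) := by
  obtain ⟨ha0, ha2⟩ := ha
  have hc : 0 < φ ^ 2 / 2 := by positivity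
  rw [integral_Ioi_eq_integral_div_sq_smul_comp_div _ hc, setIntegral_congr_fun measurableSet_Ioi
      fun u hu => (smul_eq_mul _ _).trans (div_sq_mul_scaleMixtureIntegrand_div hc (by ring) hu),
    setIntegral_Ioi_ite_lt_eq_add hc.le
      (((integrableOn_rpow_sub_one_mul_exp_neg (by linarith)).mono_set
        Ioc_subset_Ioi_self).const_mul _)
      (((integrableOn_rpow_sub_one_mul_exp_neg (by linarith)).mono_set
        (Ioi_subset_Ioi hc.le)).const_mul _),
    integral_const_mul, integral_const_mul, integral_Ioc_eq_integral_Ioo, ← lowerGamma,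
    ← upperGamma, half_mul_rpow_neg_sq_div_two_div_sqrt_two_pi a hφ,
    half_mul_rpow_neg_sq_div_two_div_sqrt_two_pi a hφ]
  ring_nf
end

section
/- Let m(y) = ∫ (1/√(2π)) e^{−(y−φ)²/2} h(φ) dφ where h is a probability density on ℝ satisfying h(φ) ≍ 1/(|φ|(log|φ|)²) as |φ| → ∞ (i.e., there are positive constants c, C, M such that c/(|φ|(log|φ|)²) ≤ h(φ) ≤ C/(|φ|(log|φ|)²) for |φ| > M). Then there exist positive constants c', C' and M' such that for |y| > M', c'/(|y|(log|y|)²) ≤ m(y) ≤ C'/(|y|(log|y|)²). -/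
open Real MeasureTheory ProbabilityTheory Set NNReal

/-! With `w t = t (log t)²`, the weight changes by at most a factor 8 when its argument is halved
or doubled, so on the window `|φ - y| ≤ |y|/2` the density `h φ` is comparable to `1 / w |y|`.
The lower bound keeps only `|φ - y| ≤ 1`, where the kernel is bounded below. For the upper bound,
the kernel has mass at most 1 on the window, and off it the kernel is at most `exp (-y²/8)`,
which is `O(1 / w |y|)`, against the total mass 1 of `h`. -/

lemma one_div_sqrt_two_pi_mul_exp_eq_gaussianPDFReal (y φ : ℝ) :
    1 / √(2 * π) * exp (-(y - φ) ^ 2 / 2) = gaussianPDFReal y 1 φ := by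
  rw [gaussianPDFReal, NNReal.coe_one, mul_one, mul_one, one_div, ← neg_sub φ y, neg_sq]

lemma gaussianPDFReal_le_gaussianPDFReal {μ μ' x x' : ℝ} {v : ℝ≥0} (h : |x' - μ'| ≤ |x - μ|) :
    gaussianPDFReal μ v x ≤ gaussianPDFReal μ' v x' := by
  unfold gaussianPDFReal
  gcongr _ * exp (-?_ / _)
  exact sq_le_sq.mpr h

lemma gaussianPDFReal_le_inv_sqrt (μ : ℝ) (v : ℝ≥0) (x : ℝ) :
    gaussianPDFReal μ v x ≤ (√(2 * π * v))⁻¹ := by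
  refine mul_le_of_le_one_right (by positivity) (exp_le_one_iff.mpr ?_)
  exact div_nonpos_of_nonpos_of_nonneg (neg_nonpos.mpr (sq_nonneg _)) (by positivity)

lemma MeasureTheory.Integrable.gaussianPDFReal_mul {h : ℝ → ℝ} (hh : Integrable h) (μ : ℝ)
    (v : ℝ≥0) :
    Integrable (fun x ↦ gaussianPDFReal μ v x * h x) :=
  hh.bdd_mul (stronglyMeasurable_gaussianPDFReal μ v).aestronglyMeasurable
    (.of_forall fun x ↦ by
      rw [norm_of_nonneg (gaussianPDFReal_nonneg μ v x)]
      exact gaussianPDFReal_le_inv_sqrt μ v x)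

section Convolution

variable {h : ℝ → ℝ} {μ a : ℝ} {v : ℝ≥0}

lemma two_mul_gaussianPDFReal_mul_le_integral (hh : Integrable h) (h_nonneg : ∀ x, 0 ≤ h x)
    (ha : ∀ x, |x - μ| ≤ 1 → a ≤ h x) :
    2 * gaussianPDFReal 0 v 1 * a ≤ ∫ x, gaussianPDFReal μ v x * h x := by
  have hbound : ∀ x ∈ Icc (μ - 1) (μ + 1),
      gaussianPDFReal 0 v 1 * a ≤ gaussianPDFReal μ v x * h x := by
    intro x hx
    have hx : |x - μ| ≤ 1 := abs_sub_le_iff.mpr ⟨by linarith [hx.2], by linarith [hx.1]⟩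
    calc gaussianPDFReal 0 v 1 * a ≤ gaussianPDFReal 0 v 1 * h x := by
          gcongr
          · exact gaussianPDFReal_nonneg 0 v 1
          · exact ha x hx
      _ ≤ gaussianPDFReal μ v x * h x := by
          gcongr
          · exact h_nonneg x
          · exact gaussianPDFReal_le_gaussianPDFReal (by simpa using hx)
  calc 2 * gaussianPDFReal 0 v 1 * a
      ≤ ∫ x in Icc (μ - 1) (μ + 1), gaussianPDFReal μ v x * h x := by
        have := setIntegral_ge_of_const_le measurableSet_Icc (by simp) hbound
          (hh.gaussianPDFReal_mul μ v).integrableOn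
        simpa [Measure.real, mul_assoc, show μ + 1 - (μ - 1) = 2 by ring] using this
    _ ≤ ∫ x, gaussianPDFReal μ v x * h x :=
        setIntegral_le_integral (hh.gaussianPDFReal_mul μ v)
          (.of_forall fun x ↦ mul_nonneg (gaussianPDFReal_nonneg μ v x) (h_nonneg x))

lemma integral_gaussianPDFReal_mul_le (hh : Integrable h) (h_nonneg : ∀ x, 0 ≤ h x)
    (hv : v ≠ 0) {r : ℝ} (ha₀ : 0 ≤ a) (hr : 0 ≤ r) (ha : ∀ x, |x - μ| ≤ r → h x ≤ a) :
    ∫ x, gaussianPDFReal μ v x * h x ≤ a + gaussianPDFReal 0 v r * ∫ x, h x := by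
  have hpoint : ∀ x, gaussianPDFReal μ v x * h x ≤
      a * gaussianPDFReal μ v x + gaussianPDFReal 0 v r * h x := by
    intro x
    have hg := gaussianPDFReal_nonneg μ v x
    have hg₀ := gaussianPDFReal_nonneg 0 v r
    rcases le_or_gt |x - μ| r with hx | hx
    · nlinarith [ha x hx, h_nonneg x]
    · have : gaussianPDFReal μ v x ≤ gaussianPDFReal 0 v r :=
        gaussianPDFReal_le_gaussianPDFReal (by rw [sub_zero, abs_of_nonneg hr]; exact hx.le)
      nlinarith [h_nonneg x]
  calc ∫ x, gaussianPDFReal μ v x * h x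
      ≤ ∫ x, (a * gaussianPDFReal μ v x + gaussianPDFReal 0 v r * h x) :=
        integral_mono (hh.gaussianPDFReal_mul μ v)
          (((integrable_gaussianPDFReal μ v).const_mul a).add (hh.const_mul _)) hpoint
    _ = a + gaussianPDFReal 0 v r * ∫ x, h x := by
        rw [integral_add ((integrable_gaussianPDFReal μ v).const_mul a) (hh.const_mul _),
          integral_const_mul, integral_const_mul, integral_gaussianPDFReal_eq_one μ hv, mul_one]

end Convolution

lemma mul_log_sq_pos {t : ℝ} (ht : 1 < t) : 0 < t * log t ^ 2 :=
  mul_pos (by linarith) (pow_pos (log_pos ht) 2)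

lemma mul_log_sq_le_of_le_two_mul {s t : ℝ} (hs : 2 ≤ s) (ht : 1 ≤ t) (hts : t ≤ 2 * s) :
    t * log t ^ 2 ≤ 8 * (s * log s ^ 2) := by
  have hlog : log t ≤ 2 * log s := by
    calc log t ≤ log (s ^ 2) := log_le_log (by linarith) (by nlinarith)
      _ = 2 * log s := by norm_num [log_pow]
  have := log_nonneg ht
  have : log t ^ 2 ≤ 4 * log s ^ 2 := by nlinarith
  nlinarith [sq_nonneg (log t)]

lemma mul_log_sq_le_of_half_le {s t : ℝ} (hs : 4 ≤ s) (hst : s / 2 ≤ t) :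
    s * log s ^ 2 ≤ 8 * (t * log t ^ 2) := by
  have hlog : log s / 2 ≤ log t := by
    have h4 : 2 * log 2 ≤ log s := by
      rw [← log_rpow two_pos]; exact log_le_log (by norm_num) (by norm_num; linarith)
    have := log_le_log (by linarith) hst
    rw [log_div (by linarith) two_ne_zero] at this
    linarith
  have : 0 ≤ log s := log_nonneg (by linarith)
  have : log s ^ 2 ≤ 4 * log t ^ 2 := by nlinarith
  nlinarith [sq_nonneg (log s)]

lemma gaussianPDFReal_zero_one_half_le {t : ℝ} (ht : 8 ≤ t) :
    gaussianPDFReal 0 1 (t / 2) ≤ 6 / (t * log t ^ 2) := by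
  have ht₀ : 0 < t := by linarith
  have hlog : 0 < log t := log_pos (by linarith)
  calc gaussianPDFReal 0 1 (t / 2) ≤ exp (-t) := by
        refine (mul_le_of_le_one_left (exp_nonneg _) ?_).trans (exp_le_exp.mpr ?_)
        · exact inv_le_one_of_one_le₀ (one_le_sqrt.mpr (by push_cast; nlinarith [pi_gt_three]))
        · push_cast; nlinarith
    _ ≤ 6 / t ^ 3 := by
        rw [exp_neg, le_div_iff₀ (by positivity), inv_mul_le_iff₀ (exp_pos t)]
        have := pow_div_factorial_le_exp t ht₀.le 3
        norm_num [Nat.factorial] at this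
        linarith
    _ ≤ 6 / (t * log t ^ 2) := by
        gcongr
        calc t * log t ^ 2 ≤ t * t ^ 2 := by gcongr; exact log_le_self ht₀.le
          _ = t ^ 3 := by ring

theorem gaussian_convolution_preserves_tail_general
    (h : ℝ → ℝ) (hnonneg : ∀ φ, 0 ≤ h φ)
    (hint : ∫ φ : ℝ, h φ = 1)
    (c C M : ℝ) (hc : 0 < c) (hC : 0 < C)
    (htail : ∀ φ : ℝ, M < |φ| →
      c / (|φ| * (Real.log |φ|)^2) ≤ h φ ∧ h φ ≤ C / (|φ| * (Real.log |φ|)^2)) :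
    ∃ c' C' M' : ℝ, 0 < c' ∧ 0 < C' ∧ 0 < M' ∧ ∀ y : ℝ, M' < |y| →
      c' / (|y| * (Real.log |y|)^2)
          ≤ ∫ φ : ℝ, (1 / Real.sqrt (2 * π)) * Real.exp (-(y - φ)^2 / 2) * h φ ∧
      (∫ φ : ℝ, (1 / Real.sqrt (2 * π)) * Real.exp (-(y - φ)^2 / 2) * h φ)
          ≤ C' / (|y| * (Real.log |y|)^2) := by
  have hh : Integrable h := .of_integral_ne_zero (by rw [hint]; exact one_ne_zero)
  have hg := gaussianPDFReal_pos 0 1 1 one_ne_zero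
  refine ⟨c * gaussianPDFReal 0 1 1 / 4, 8 * C + 6, 2 * |M| + 8, by positivity, by positivity,
    by positivity, fun y hy ↦ ?_⟩
  simp_rw [one_div_sqrt_two_pi_mul_exp_eq_gaussianPDFReal]
  have hM := le_abs_self M
  have hM₀ := abs_nonneg M
  have hw := mul_log_sq_pos (by linarith : 1 < |y|)
  constructor
  · have hlow : ∀ φ, |φ - y| ≤ 1 → c / (8 * (|y| * log |y| ^ 2)) ≤ h φ := fun φ hφ ↦ by
      have := abs_le.mp ((abs_abs_sub_abs_le_abs_sub φ y).trans hφ)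
      refine le_trans ?_ (htail φ (by linarith)).1
      exact div_le_div_of_nonneg_left hc.le (mul_log_sq_pos (by linarith))
        (mul_log_sq_le_of_le_two_mul (by linarith) (by linarith) (by linarith))
    calc _ = 2 * gaussianPDFReal 0 1 1 * (c / (8 * (|y| * log |y| ^ 2))) := by field_simp; ring
      _ ≤ _ := two_mul_gaussianPDFReal_mul_le_integral hh hnonneg hlow
  · have hupp : ∀ φ, |φ - y| ≤ |y| / 2 → h φ ≤ 8 * C / (|y| * log |y| ^ 2) := fun φ hφ ↦ by
      have := abs_le.mp ((abs_abs_sub_abs_le_abs_sub φ y).trans hφ)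
      refine (htail φ (by linarith)).2.trans ?_
      rw [div_le_div_iff₀ (mul_log_sq_pos (by linarith)) hw]
      nlinarith [mul_log_sq_le_of_half_le (by linarith : 4 ≤ |y|) (by linarith : |y| / 2 ≤ |φ|)]
    calc _ ≤ 8 * C / (|y| * log |y| ^ 2) + gaussianPDFReal 0 1 (|y| / 2) * ∫ φ, h φ :=
          integral_gaussianPDFReal_mul_le hh hnonneg one_ne_zero (by positivity) (by positivity)
            hupp
      _ ≤ 8 * C / (|y| * log |y| ^ 2) + 6 / (|y| * log |y| ^ 2) := by
          rw [hint, mul_one]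
          gcongr
          exact gaussianPDFReal_zero_one_half_le (by linarith)
      _ = _ := by ring

/-- Gaussian convolution preserves tails of order 1/(|φ| (log |φ|)²): if a probability
density h has such two-sided tail bounds, then so does the marginal m(y) = ∫ N(y-φ) h(φ) dφ. -/
theorem gaussian_convolution_preserves_tail
    (h : ℝ → ℝ) (hmeas : Measurable h) (hnonneg : ∀ φ, 0 ≤ h φ)
    (hint : ∫ φ : ℝ, h φ = 1)
    (c C M : ℝ) (hc : 0 < c) (hC : 0 < C) (hM : 0 < M)
    (htail : ∀ φ : ℝ, M < |φ| →
      c / (|φ| * (Real.log |φ|)^2) ≤ h φ ∧ h φ ≤ C / (|φ| * (Real.log |φ|)^2)) :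
    ∃ c' C' M' : ℝ, 0 < c' ∧ 0 < C' ∧ 0 < M' ∧ ∀ y : ℝ, M' < |y| →
      c' / (|y| * (Real.log |y|)^2)
          ≤ ∫ φ : ℝ, (1 / Real.sqrt (2 * π)) * Real.exp (-(y - φ)^2 / 2) * h φ ∧
      (∫ φ : ℝ, (1 / Real.sqrt (2 * π)) * Real.exp (-(y - φ)^2 / 2) * h φ)
          ≤ C' / (|y| * (Real.log |y|)^2) :=
  gaussian_convolution_preserves_tail_general h hnonneg hint c C M hc hC htail
end
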